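/- STRICT distributes over the propositional and regular operators: STRICT(ρ₁ OR ρ₂) ≡ STRICT(ρ₁) OR STRICT(ρ₂), STRICT(ρ₁ ; ρ₂) ≡ STRICT(ρ₁) : STRICT(ρ₂), STRICT(ρ+) ≡ STRICT(ρ)⊕, STRICT(ρ FILTER P) ≡ STRICT(ρ) FILTER P, and STRICT(ρ IN A) ≡ STRICT(ρ) IN A, where equivalence means equal sets of accepted complex events over every stream and positions. Abstractly, letting Strict(X) denote the subset of a complex-event set X whose supports are contiguous intervals: Strict(X ∪ Y) = Strict(X) ∪ Strict(Y); Strict of the concatenation product {C₁·C₂ : end(C₁)+1 = start(C₂)-free} equals the adjacent-concatenation of Strict sets; and Strict commutes with support-preserving unary operations. -/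
import Mathlib


variable {L : Type*} [Fintype L]

/-- The support of a complex event. -/
def suppCE (C : L → Finset ℕ) : Finset ℕ := Finset.univ.biUnion C

/-- Pointwise-union concatenation of complex events. -/
def concatCE (C₁ C₂ : L → Finset ℕ) : L → Finset ℕ := fun A => C₁ A ∪ C₂ A

/-- A complex event is contiguous if its support is an interval of stream
positions. -/
def Contiguous (C : L → Finset ℕ) : Prop :=
  ∀ a ∈ suppCE C, ∀ b ∈ suppCE C, ∀ c, a ≤ c → c ≤ b → c ∈ suppCE C

/-- `Strict X`: the contiguous complex events of `X` (semantics of STRICT). -/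
def StrictS (X : Set (L → Finset ℕ)) : Set (L → Finset ℕ) :=
  {C ∈ X | Contiguous C}

/-- Concatenation product of two sets of complex events (semantics of `;`):
all positions of the first factor precede all positions of the second. -/
def Concat (X Y : Set (L → Finset ℕ)) : Set (L → Finset ℕ) :=
  {C | ∃ C₁ ∈ X, ∃ C₂ ∈ Y,
    (∀ p ∈ suppCE C₁, ∀ q ∈ suppCE C₂, p < q) ∧ C = concatCE C₁ C₂}

/-- Adjacent concatenation (semantics of `:`): additionally
`max (supp C₁) + 1 = min (supp C₂)`. -/
def AdjConcat (X Y : Set (L → Finset ℕ)) : Set (L → Finset ℕ) :=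
  {C | ∃ C₁ ∈ X, ∃ C₂ ∈ Y,
    (∀ p ∈ suppCE C₁, ∀ q ∈ suppCE C₂, p < q) ∧
    (∃ m, m ∈ suppCE C₁ ∧ (∀ p ∈ suppCE C₁, p ≤ m) ∧ m + 1 ∈ suppCE C₂ ∧
      (∀ q ∈ suppCE C₂, m + 1 ≤ q)) ∧
    C = concatCE C₁ C₂}

/-- Kleene plus of a set of complex events (semantics of `+`). -/
inductive PlusS (X : Set (L → Finset ℕ)) : Set (L → Finset ℕ)
  | base {C} : C ∈ X → PlusS X C
  | step {C₁ C₂} : C₁ ∈ X → PlusS X C₂ →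
      (∀ p ∈ suppCE C₁, ∀ q ∈ suppCE C₂, p < q) → PlusS X (concatCE C₁ C₂)

/-- Strict iteration (semantics of `⊕`): consecutive iterations are adjacent. -/
inductive OPlusS (X : Set (L → Finset ℕ)) : Set (L → Finset ℕ)
  | base {C} : C ∈ X → OPlusS X C
  | step {C₁ C₂} : C₁ ∈ X → OPlusS X C₂ →
      (∀ p ∈ suppCE C₁, ∀ q ∈ suppCE C₂, p < q) →
      (∃ m, m ∈ suppCE C₁ ∧ (∀ p ∈ suppCE C₁, p ≤ m) ∧ m + 1 ∈ suppCE C₂ ∧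
        (∀ q ∈ suppCE C₂, m + 1 ≤ q)) →
      OPlusS X (concatCE C₁ C₂)

lemma supp_concat (C₁ C₂ : L → Finset ℕ) :
    suppCE (concatCE C₁ C₂) = suppCE C₁ ∪ suppCE C₂ := by
  ext x
  simp only [suppCE, concatCE, Finset.mem_biUnion, Finset.mem_union, Finset.mem_univ,
    true_and]
  constructor
  · rintro ⟨a, ha | ha⟩
    · exact Or.inl ⟨a, ha⟩
    · exact Or.inr ⟨a, ha⟩
  · rintro (⟨a, ha⟩ | ⟨a, ha⟩)
    · exact ⟨a, Or.inl ha⟩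
    · exact ⟨a, Or.inr ha⟩

lemma contiguous_glue {C₁ C₂ : L → Finset ℕ} (h₁ : Contiguous C₁) (h₂ : Contiguous C₂)
    (hadj : ∃ m, m ∈ suppCE C₁ ∧ (∀ p ∈ suppCE C₁, p ≤ m) ∧ m + 1 ∈ suppCE C₂ ∧
      (∀ q ∈ suppCE C₂, m + 1 ≤ q)) :
    Contiguous (concatCE C₁ C₂) := by
  obtain ⟨m, hm1, hmax, hm2, hmin⟩ := hadj
  intro a ha b hb c hac hcb
  rw [supp_concat] at ha hb ⊢
  rw [Finset.mem_union] at ha hb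
  rw [Finset.mem_union]
  by_cases hcm : c ≤ m
  · left
    rcases ha with ha | ha
    · rcases hb with hb | hb
      · exact h₁ a ha b hb c hac hcb
      · exact h₁ a ha m hm1 c hac hcm
    · have := hmin a ha; omega
  · right
    push_neg at hcm
    rcases hb with hb | hb
    · have := hmax b hb; omega
    · rcases ha with ha | ha
      · exact h₂ (m + 1) hm2 b hb c (by omega) hcb
      · exact h₂ a ha b hb c hac hcb

lemma contiguous_split {C₁ C₂ : L → Finset ℕ}
    (h : Contiguous (concatCE C₁ C₂))
    (hord : ∀ p ∈ suppCE C₁, ∀ q ∈ suppCE C₂, p < q)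
    (hn₁ : (suppCE C₁).Nonempty) (hn₂ : (suppCE C₂).Nonempty) :
    Contiguous C₁ ∧ Contiguous C₂ ∧
      ∃ m, m ∈ suppCE C₁ ∧ (∀ p ∈ suppCE C₁, p ≤ m) ∧ m + 1 ∈ suppCE C₂ ∧
        (∀ q ∈ suppCE C₂, m + 1 ≤ q) := by
  have hmemc : ∀ x, x ∈ suppCE C₁ ∨ x ∈ suppCE C₂ → x ∈ suppCE (concatCE C₁ C₂) := by
    intro x hx; rw [supp_concat, Finset.mem_union]; exact hx
  have hun : ∀ x ∈ suppCE (concatCE C₁ C₂), x ∈ suppCE C₁ ∨ x ∈ suppCE C₂ := by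
    intro x hx; rw [supp_concat, Finset.mem_union] at hx; exact hx
  refine ⟨?_, ?_, ?_⟩
  · intro a ha b hb c hac hcb
    have hc := h a (hmemc a (Or.inl ha)) b (hmemc b (Or.inl hb)) c hac hcb
    rcases hun c hc with h' | h'
    · exact h'
    · have := hord b hb c h'; omega
  · intro a ha b hb c hac hcb
    have hc := h a (hmemc a (Or.inr ha)) b (hmemc b (Or.inr hb)) c hac hcb
    rcases hun c hc with h' | h'
    · have := hord c h' a ha; omega
    · exact h'
  · obtain ⟨n, hn⟩ := hn₂
    refine ⟨(suppCE C₁).max' hn₁, (suppCE C₁).max'_mem hn₁,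
      fun p hp => Finset.le_max' _ p hp, ?_, fun q hq => hord _ ((suppCE C₁).max'_mem hn₁) q hq⟩
    set m := (suppCE C₁).max' hn₁ with hm
    have hmn : m < n := hord _ ((suppCE C₁).max'_mem hn₁) n hn
    have hc := h m (hmemc m (Or.inl ((suppCE C₁).max'_mem hn₁))) n (hmemc n (Or.inr hn))
      (m + 1) (by omega) (by omega)
    rcases hun _ hc with h' | h'
    · have := Finset.le_max' _ _ h'; omega
    · exact h'

lemma plusS_supp_nonempty {X : Set (L → Finset ℕ)}
    (hX : ∀ C ∈ X, (suppCE C).Nonempty) : ∀ C ∈ PlusS X, (suppCE C).Nonempty := by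
  intro C hC
  induction hC with
  | base h => exact hX _ h
  | step h₁ h₂ hord ih =>
    obtain ⟨x, hx⟩ := ih
    exact ⟨x, by rw [supp_concat]; exact Finset.mem_union_right _ hx⟩

lemma contiguous_congr {C D : L → Finset ℕ} (h : suppCE D = suppCE C) :
    Contiguous D ↔ Contiguous C := by
  unfold Contiguous; rw [h]

/-- STRICT distributes over the propositional and regular
operators.  For sets of complex events with nonempty supports:
`Strict (X ∪ Y) = Strict X ∪ Strict Y`;
`Strict (X ; Y) = Strict X : Strict Y`;
`Strict (X+) = (Strict X)⊕`;
and STRICT commutes with every support-preserving unary operation (covering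
FILTER with universally extended predicates and IN). -/
theorem strict_distributes (X Y : Set (L → Finset ℕ))
    (hX : ∀ C ∈ X, (suppCE C).Nonempty) (hY : ∀ C ∈ Y, (suppCE C).Nonempty) :
    StrictS (X ∪ Y) = StrictS X ∪ StrictS Y ∧
    StrictS (Concat X Y) = AdjConcat (StrictS X) (StrictS Y) ∧
    StrictS (PlusS X) = OPlusS (StrictS X) ∧
    (∀ f : (L → Finset ℕ) → (L → Finset ℕ),
      (∀ C, suppCE (f C) = suppCE C) → StrictS (f '' X) = f '' StrictS X) := by
  refine ⟨?_, ?_, ?_, ?_⟩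
  · ext C
    constructor
    · rintro ⟨hC | hC, hcont⟩
      · exact Or.inl ⟨hC, hcont⟩
      · exact Or.inr ⟨hC, hcont⟩
    · rintro (⟨hC, hcont⟩ | ⟨hC, hcont⟩)
      · exact ⟨Or.inl hC, hcont⟩
      · exact ⟨Or.inr hC, hcont⟩
  · ext C
    constructor
    · rintro ⟨⟨C₁, hC₁, C₂, hC₂, hord, rfl⟩, hcont⟩
      obtain ⟨hc₁, hc₂, hadj⟩ := contiguous_split hcont hord (hX _ hC₁) (hY _ hC₂)
      exact ⟨C₁, ⟨hC₁, hc₁⟩, C₂, ⟨hC₂, hc₂⟩, hord, hadj, rfl⟩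
    · rintro ⟨C₁, ⟨hC₁, hc₁⟩, C₂, ⟨hC₂, hc₂⟩, hord, hadj, rfl⟩
      exact ⟨⟨C₁, hC₁, C₂, hC₂, hord, rfl⟩, contiguous_glue hc₁ hc₂ hadj⟩
  · ext C
    constructor
    · rintro ⟨hC, hcont⟩
      revert hcont
      induction hC with
      | base h => exact fun hcont => OPlusS.base ⟨h, hcont⟩
      | step h₁ h₂ hord ih =>
        intro hcont
        obtain ⟨hc₁, hc₂, hadj⟩ :=
          contiguous_split hcont hord (hX _ h₁) (plusS_supp_nonempty hX _ h₂)
        exact OPlusS.step ⟨h₁, hc₁⟩ (ih hc₂) hord hadj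
    · intro hC
      induction hC with
      | base h => exact ⟨PlusS.base h.1, h.2⟩
      | step h₁ h₂ hord hadj ih =>
        exact ⟨PlusS.step h₁.1 ih.1 hord, contiguous_glue h₁.2 ih.2 hadj⟩
  · intro f hf
    ext D
    constructor
    · rintro ⟨⟨C, hC, rfl⟩, hcont⟩
      exact ⟨C, ⟨hC, (contiguous_congr (hf C)).1 hcont⟩, rfl⟩
    · rintro ⟨C, ⟨hC, hcont⟩, rfl⟩
      exact ⟨⟨C, hC, rfl⟩, (contiguous_congr (hf C)).2 hcont⟩
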